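/- Fix k ≥ 2. Let P : C(S^{k-1}) → C(S^{k-1}) be a continuous linear operator and c a constant such that ∫_{SO(k)} (T_a ∘ P ∘ T_{a^{-1}}) h(ξ) dμ_k(a) = c · h(ξ) for every h ∈ C(S^{k-1}) and ξ ∈ S^{k-1}. Let ι : SO(k) → SO(k+1) be the embedding sending a to the block-diagonal matrix diag(a, 1), so that ι(SO(k)) is the stabilizer of the north pole 1^k. Then for every h ∈ C₀(S^k) (continuous on S^k with h(1^k) = h(−1^k) = 0) and every ζ ∈ S^k, ∫_{SO(k)} (T_{ι(a)} ∘ P̂ ∘ T_{ι(a)^{-1}}) h(ζ) dμ_k(a) = c · h(ζ). -/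

import Mathlib

open MeasureTheory Matrix Metric Real
open scoped RealInnerProductSpace ENNReal
noncomputable section

abbrev Eucl (d : ℕ) : Type := EuclideanSpace ℝ (Fin d)
abbrev Sph (d : ℕ) := Metric.sphere (0 : Eucl d) 1

/-- The north pole `1^k = (0,…,0,1)` of the sphere `S^k ⊆ ℝ^{k+1}`. -/
def npole (m : ℕ) : Sph (m + 1) :=
  ⟨EuclideanSpace.single (Fin.last m) (1 : ℝ), by simp⟩

/-- The south pole `-1^k = (0,…,0,-1)`. -/
def spole (m : ℕ) : Sph (m + 1) :=
  ⟨EuclideanSpace.single (Fin.last m) (-1 : ℝ), by simp⟩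

lemma sphere_sum_sq {d : ℕ} (y : Sph d) : ∑ i : Fin d, (y.1 i) ^ 2 = 1 := by
  have hy : ‖y.1‖ = 1 := by simpa using y.2
  rw [EuclideanSpace.norm_eq] at hy
  have h' : Real.sqrt (∑ i, ‖y.1 i‖ ^ 2) ^ 2 = 1 := by rw [hy]; norm_num
  rw [Real.sq_sqrt (by positivity)] at h'
  simpa [Real.norm_eq_abs, sq_abs] using h'

lemma phi_mem {m : ℕ} (t : ℝ) (y : Sph (m + 1)) :
    (WithLp.equiv 2 (Fin (m + 2) → ℝ)).symm
      (Fin.snoc (fun i => Real.sin t * ((WithLp.equiv 2 (Fin (m + 1) → ℝ)) y.1) i) (Real.cos t))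
      ∈ Metric.sphere (0 : Eucl (m + 2)) 1 := by
  rw [mem_sphere_iff_norm, sub_zero, EuclideanSpace.norm_eq]
  have hw : (∑ i : Fin (m + 2),
      ‖(WithLp.equiv 2 (Fin (m + 2) → ℝ)).symm
        (Fin.snoc (fun i => Real.sin t * ((WithLp.equiv 2 (Fin (m + 1) → ℝ)) y.1) i)
          (Real.cos t)) i‖ ^ 2) = 1 := by
    simp only [WithLp.equiv_symm_apply, PiLp.toLp_apply, Real.norm_eq_abs, sq_abs]
    rw [Fin.sum_univ_castSucc]
    simp only [Fin.snoc_castSucc, Fin.snoc_last]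
    have hmul : (∑ i : Fin (m + 1),
        (Real.sin t * ((WithLp.equiv 2 (Fin (m + 1) → ℝ)) y.1) i) ^ 2)
        = Real.sin t ^ 2 * ∑ i : Fin (m + 1), (y.1 i) ^ 2 := by
      rw [Finset.mul_sum]
      refine Finset.sum_congr rfl fun i _ => ?_
      have : ((WithLp.equiv 2 (Fin (m + 1) → ℝ)) y.1) i = y.1 i := rfl
      rw [this]; ring
    rw [hmul, sphere_sum_sq, mul_one]
    exact Real.sin_sq_add_cos_sq t
  rw [hw]
  exact Real.sqrt_one

/-- The map `Φ_k(t, y) = (y sin t, cos t)` from `ℝ × S^{k-1}` to `S^k`. -/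
def phi {m : ℕ} (t : ℝ) (y : Sph (m + 1)) : Sph (m + 2) :=
  ⟨(WithLp.equiv 2 (Fin (m + 2) → ℝ)).symm
      (Fin.snoc (fun i => Real.sin t * ((WithLp.equiv 2 (Fin (m + 1) → ℝ)) y.1) i) (Real.cos t)),
    phi_mem t y⟩

/-- The latitude `t ∈ [0,π]` of a point on `S^k`, i.e. `arccos` of the last coordinate. -/
def lat {m : ℕ} (ξ : Sph (m + 2)) : ℝ := Real.arccos (ξ.1 (Fin.last (m + 1)))

lemma lat_mem_Icc {m : ℕ} (ξ : Sph (m + 2)) : lat ξ ∈ Set.Icc (0 : ℝ) π :=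
  ⟨Real.arccos_nonneg _, Real.arccos_le_pi _⟩

/-- The "equatorial part" of a point of `S^k`: its first `k` coordinates. -/
def eqpart {m : ℕ} (ξ : Sph (m + 2)) : Eucl (m + 1) :=
  (WithLp.equiv 2 (Fin (m + 1) → ℝ)).symm (fun i => ξ.1 i.castSucc)

open scoped Classical in
/-- The longitudinal direction of a point of `S^k`, an element of `S^{k-1}`; at the poles it is
(by convention) the north pole `1^{k-1}` of `S^{k-1}`. -/
def ydir {m : ℕ} (ξ : Sph (m + 2)) : Sph (m + 1) :=
  if h : eqpart ξ = 0 then npole m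
  else ⟨‖eqpart ξ‖⁻¹ • eqpart ξ, by
    rw [mem_sphere_iff_norm, sub_zero, norm_smul, norm_inv, norm_norm,
      inv_mul_cancel₀ (norm_ne_zero_iff.mpr h)]⟩

lemma continuous_phi_left {m : ℕ} (y : Sph (m + 1)) :
    Continuous fun t : ℝ => (phi t y : Sph (m + 2)) := by
  apply Continuous.subtype_mk
  refine (PiLp.continuous_toLp 2 (fun _ : Fin (m + 2) => ℝ)).comp ?_
  apply continuous_pi
  intro j
  refine Fin.lastCases ?_ ?_ j
  · simpa [Fin.snoc_last] using Real.continuous_cos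
  · intro i
    simp only [Fin.snoc_castSucc]
    exact Real.continuous_sin.mul continuous_const

lemma continuous_phi_right {m : ℕ} (t : ℝ) :
    Continuous fun y : Sph (m + 1) => (phi t y : Sph (m + 2)) := by
  apply Continuous.subtype_mk
  refine (PiLp.continuous_toLp 2 (fun _ : Fin (m + 2) => ℝ)).comp ?_
  apply continuous_pi
  intro j
  refine Fin.lastCases ?_ ?_ j
  · simpa [Fin.snoc_last] using continuous_const (y := Real.cos t)
  · intro i
    simp only [Fin.snoc_castSucc]
    exact continuous_const.mul
      ((continuous_apply i).comp ((PiLp.continuous_ofLp 2 (fun _ : Fin (m + 1) => ℝ)).comp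
        continuous_subtype_val))

/-- The interval `[0,π]`. -/
abbrev IccPi : Set ℝ := Set.Icc (0 : ℝ) π

/-- `0` as an element of `[0,π]`. -/
def loPt : IccPi := ⟨0, Set.left_mem_Icc.mpr Real.pi_nonneg⟩

/-- `π` as an element of `[0,π]`. -/
def hiPt : IccPi := ⟨π, Set.right_mem_Icc.mpr Real.pi_nonneg⟩

/-- The slice of a continuous function on `S^k` along the meridian through `y ∈ S^{k-1}`:
`t ↦ f(Φ_k(t,y))` as an element of `C[0,π]`. -/
def merid {m : ℕ} (f : C(Sph (m + 2), ℝ)) (y : Sph (m + 1)) : C(IccPi, ℝ) :=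
  ⟨fun t => f (phi t.1 y), by
    exact f.continuous.comp ((continuous_phi_left y).comp continuous_subtype_val)⟩

/-- The latitudinal operator `L^#` acting on continuous functions on `S^k`. -/
def latOp {m : ℕ} (L : C(IccPi, ℝ) →L[ℝ] C(IccPi, ℝ)) (f : C(Sph (m + 2), ℝ))
    (ξ : Sph (m + 2)) : ℝ :=
  L (merid f (ydir ξ)) ⟨lat ξ, lat_mem_Icc ξ⟩

/-- The reflection `t ↦ π - t` of `[0,π]`. -/
def reflI : C(IccPi, IccPi) :=
  ⟨fun t => ⟨π - t.1, ⟨by linarith [t.2.2], by linarith [t.2.1]⟩⟩,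
    Continuous.subtype_mk (continuous_const.sub continuous_subtype_val) _⟩

/-- The reflection operator `ρ g(t) = g(π - t)` on `C[0,π]`. -/
def reflOp : C(IccPi, ℝ) →L[ℝ] C(IccPi, ℝ) where
  toFun g := g.comp reflI
  map_add' g h := rfl
  map_smul' c g := rfl
  cont := ContinuousMap.continuous_precomp reflI

/-- The reflection of the sphere `S^k` changing the sign of the last coordinate. -/
def reflSph {m : ℕ} (ξ : Sph (m + 2)) : Sph (m + 2) :=
  ⟨(WithLp.equiv 2 (Fin (m + 2) → ℝ)).symm
      (Fin.snoc (fun i => ξ.1 i.castSucc) (-(ξ.1 (Fin.last (m + 1))))), by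
    rw [mem_sphere_iff_norm, sub_zero, EuclideanSpace.norm_eq]
    have hw : (∑ i : Fin (m + 2),
        ‖(WithLp.equiv 2 (Fin (m + 2) → ℝ)).symm
          (Fin.snoc (fun i => ξ.1 i.castSucc) (-(ξ.1 (Fin.last (m + 1))))) i‖ ^ 2) = 1 := by
      simp only [WithLp.equiv_symm_apply, PiLp.toLp_apply, Real.norm_eq_abs, sq_abs]
      rw [Fin.sum_univ_castSucc]
      simp only [Fin.snoc_castSucc, Fin.snoc_last, neg_sq]
      have h := sphere_sum_sq ξ
      rw [Fin.sum_univ_castSucc] at h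
      exact h
    rw [hw]
    exact Real.sqrt_one⟩

lemma continuous_reflSph {m : ℕ} : Continuous (reflSph (m := m)) := by
  apply Continuous.subtype_mk
  refine (PiLp.continuous_toLp 2 (fun _ : Fin (m + 2) => ℝ)).comp ?_
  apply continuous_pi
  intro j
  refine Fin.lastCases ?_ ?_ j
  · simp only [Fin.snoc_last]
    exact ((continuous_apply (Fin.last (m + 1))).comp
      ((PiLp.continuous_ofLp 2 (fun _ : Fin (m + 2) => ℝ)).comp continuous_subtype_val)).neg
  · intro i
    simp only [Fin.snoc_castSucc]
    exact (continuous_apply i.castSucc).comp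
      ((PiLp.continuous_ofLp 2 (fun _ : Fin (m + 2) => ℝ)).comp continuous_subtype_val)

/-- The reflection `ρ^#` as a continuous self-map of `S^k`. -/
def reflSphCM {m : ℕ} : C(Sph (m + 2), Sph (m + 2)) := ⟨reflSph, continuous_reflSph⟩

instance (d : ℕ) : MeasurableSpace (Matrix (Fin d) (Fin d) ℝ) :=
  inferInstanceAs (MeasurableSpace (Fin d → Fin d → ℝ))

/-- The special orthogonal group `SO(d)` as a subgroup of the orthogonal group. -/
def SOsub (d : ℕ) : Subgroup ↥(Matrix.orthogonalGroup (Fin d) ℝ) where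
  carrier := {A | Matrix.det (A : Matrix (Fin d) (Fin d) ℝ) = 1}
  one_mem' := by simp
  mul_mem' := by
    intro a b ha hb
    simp only [Set.mem_setOf_eq] at *
    rw [Matrix.UnitaryGroup.mul_val, Matrix.det_mul, ha, hb, mul_one]
  inv_mem' := by
    intro a ha
    simp only [Set.mem_setOf_eq] at *
    rw [Matrix.UnitaryGroup.inv_val, Matrix.star_eq_conjTranspose,
      show ((a : Matrix (Fin d) (Fin d) ℝ))ᴴ = (a : Matrix (Fin d) (Fin d) ℝ)ᵀ from rfl,
      Matrix.det_transpose, ha]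

/-- The special orthogonal group `SO(d)`. -/
abbrev SOg (d : ℕ) := ↥(SOsub d)

/-- The matrix of an element of `SO(d)`. -/
abbrev SOg.mat {d : ℕ} (b : SOg d) : Matrix (Fin d) (Fin d) ℝ :=
  ((b : ↥(Matrix.orthogonalGroup (Fin d) ℝ)) : Matrix (Fin d) (Fin d) ℝ)

lemma SOg.matT_mul {d : ℕ} (b : SOg d) : b.matᵀ * b.mat = 1 := by
  have h := (b : ↥(Matrix.orthogonalGroup (Fin d) ℝ)).2.1
  simpa [Matrix.star_eq_conjTranspose] using h

lemma mulVec_mem_sphere {d : ℕ} (b : SOg d) (x : Sph d) :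
    (WithLp.equiv 2 (Fin d → ℝ)).symm (b.mat.mulVec ((WithLp.equiv 2 (Fin d → ℝ)) x.1)) ∈
      Metric.sphere (0 : Eucl d) 1 := by
  have hx : ‖x.1‖ = 1 := by simpa using x.2
  rw [mem_sphere_iff_norm, sub_zero]
  have key : ∀ w : Eucl d,
      ‖w‖ ^ 2 = (WithLp.equiv 2 (Fin d → ℝ)) w ⬝ᵥ (WithLp.equiv 2 (Fin d → ℝ)) w := by
    intro w
    rw [EuclideanSpace.norm_eq, Real.sq_sqrt (by positivity)]
    simp [dotProduct, sq_abs, pow_two]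
  set v : Fin d → ℝ := (WithLp.equiv 2 (Fin d → ℝ)) x.1 with hv
  have hdot : (b.mat.mulVec v) ⬝ᵥ (b.mat.mulVec v) = v ⬝ᵥ v := by
    rw [Matrix.dotProduct_mulVec, ← Matrix.mulVec_transpose, Matrix.mulVec_mulVec, SOg.matT_mul,
      Matrix.one_mulVec]
  have h1 : ‖(WithLp.equiv 2 (Fin d → ℝ)).symm (b.mat.mulVec v)‖ ^ 2 = (1 : ℝ) := by
    rw [key, Equiv.apply_symm_apply, hdot, ← key, hx, one_pow]
  nlinarith [norm_nonneg ((WithLp.equiv 2 (Fin d → ℝ)).symm (b.mat.mulVec v))]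

/-- The rotation action of `SO(d)` on the sphere `S^{d-1}`. -/
def rot {d : ℕ} (b : SOg d) (x : Sph d) : Sph d :=
  ⟨(WithLp.equiv 2 (Fin d → ℝ)).symm (b.mat.mulVec ((WithLp.equiv 2 (Fin d → ℝ)) x.1)),
    mulVec_mem_sphere b x⟩

lemma continuous_rot {d : ℕ} (b : SOg d) : Continuous (rot b) := by
  apply Continuous.subtype_mk
  refine (PiLp.continuous_toLp 2 (fun _ : Fin d => ℝ)).comp ?_
  have : Continuous fun v : Fin d → ℝ => b.mat.mulVec v :=
    b.mat.mulVecLin.continuous_of_finiteDimensional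
  exact this.comp ((PiLp.continuous_ofLp 2 (fun _ : Fin d => ℝ)).comp continuous_subtype_val)

/-- Rotation as a continuous self-map of the sphere. -/
def rotCM {d : ℕ} (b : SOg d) : C(Sph d, Sph d) := ⟨rot b, continuous_rot b⟩

/-- The rotation operator `T_b f = f ∘ b⁻¹` on continuous functions on the sphere. -/
def Trot {d : ℕ} (b : SOg d) (f : C(Sph d, ℝ)) : C(Sph d, ℝ) := f.comp (rotCM b⁻¹)

/-- The rotation operator `T_b` on `L²` of the sphere. -/
def TrotL2 {d : ℕ} (σ : Measure (Sph d)) (hσ : ∀ b : SOg d, MeasurePreserving (rot b) σ σ)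
    (b : SOg d) : Lp ℝ 2 σ →L[ℝ] Lp ℝ 2 σ :=
  (Lp.compMeasurePreservingₗᵢ ℝ (rot b⁻¹) (hσ b⁻¹)).toContinuousLinearMap

/-- The latitude-`t` circle slice of a continuous function on `S^k`:
`y ↦ f(Φ_k(t,y))` as an element of `C(S^{k-1}, ℝ)`. -/
def ringSlice {m : ℕ} (f : C(Sph (m + 2), ℝ)) (t : ℝ) : C(Sph (m + 1), ℝ) :=
  ⟨fun y => f (phi t y), f.continuous.comp (continuous_phi_right t)⟩

open scoped Classical in
/-- The lifted operator `P̂` acting on functions on `S^k` (with value `0` at the poles,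
and defined via the latitude/longitude decomposition elsewhere). -/
def hatOp {m : ℕ} (P : C(Sph (m + 1), ℝ) →L[ℝ] C(Sph (m + 1), ℝ)) (g : Sph (m + 2) → ℝ)
    (ξ : Sph (m + 2)) : ℝ :=
  if ξ = npole (m + 1) ∨ ξ = spole (m + 1) then 0
  else if h : Continuous g then P (ringSlice ⟨g, h⟩ (lat ξ)) (ydir ξ) else 0

/-- The spherical coordinates `Ψ_n : ℝ^n → S^n` given recursively by `Ψ_1(t) = (sin t, cos t)`
and `Ψ_{n+1}(v, t) = (Ψ_n(v) sin t, cos t)`. -/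
def Psi : (n : ℕ) → (Fin n → ℝ) → Sph (n + 1)
  | 0, _ => npole 0
  | n + 1, v => phi (v (Fin.last n)) (Psi n (fun i => v i.castSucc))

/-- The patch `Ψ_n([a 0, b 0] × ⋯ × [a (n-1), b (n-1)]) ⊆ S^n`. -/
def patchSet (n : ℕ) (a b : Fin n → ℝ) : Set (Sph (n + 1)) :=
  Psi n '' {v | ∀ j, v j ∈ Set.Icc (a j) (b j)}

/-- The block-diagonal matrix `diag(A, 1)`. -/
def iotaMat {m : ℕ} (A : Matrix (Fin (m + 1)) (Fin (m + 1)) ℝ) :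
    Matrix (Fin (m + 2)) (Fin (m + 2)) ℝ :=
  Matrix.reindex (finSumFinEquiv : Fin (m + 1) ⊕ Fin 1 ≃ Fin (m + 2))
    (finSumFinEquiv : Fin (m + 1) ⊕ Fin 1 ≃ Fin (m + 2))
    (Matrix.fromBlocks A 0 0 (1 : Matrix (Fin 1) (Fin 1) ℝ))

lemma iotaMat_mem {m : ℕ} (A : Matrix (Fin (m + 1)) (Fin (m + 1)) ℝ)
    (hA : A ∈ Matrix.orthogonalGroup (Fin (m + 1)) ℝ) :
    iotaMat A ∈ Matrix.orthogonalGroup (Fin (m + 2)) ℝ := by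
  rw [Matrix.mem_orthogonalGroup_iff] at hA ⊢
  unfold iotaMat
  rw [Matrix.reindex_apply, Matrix.transpose_submatrix,
    Matrix.submatrix_mul_equiv, Matrix.fromBlocks_transpose, Matrix.fromBlocks_multiply]
  simp only [Matrix.mul_zero, Matrix.zero_mul, add_zero, zero_add, hA,
    Matrix.transpose_zero, Matrix.mul_one, Matrix.one_mul]
  rw [show (1 : Matrix (Fin 1) (Fin 1) ℝ)ᵀ = 1 by simp]
  rw [Matrix.fromBlocks_one, Matrix.submatrix_one_equiv]
lemma iotaMat_det {m : ℕ} (A : Matrix (Fin (m + 1)) (Fin (m + 1)) ℝ) (hA : A.det = 1) :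
    (iotaMat A).det = 1 := by
  unfold iotaMat
  rw [Matrix.reindex_apply, Matrix.det_submatrix_equiv_self, Matrix.det_fromBlocks_zero₂₁,
    hA, Matrix.det_one, mul_one]

/-- The embedding `ι : SO(k) → SO(k+1)`, `a ↦ diag(a, 1)`, onto the stabilizer of the
north pole. -/
def iota {m : ℕ} (a : SOg (m + 1)) : SOg (m + 2) :=
  ⟨⟨iotaMat a.mat, iotaMat_mem a.mat (a : ↥(Matrix.orthogonalGroup (Fin (m + 1)) ℝ)).2⟩,
    iotaMat_det a.mat a.2⟩

/-! The rotations `ι(a)` fix the poles and the latitude and turn the meridian coordinate by `a`: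
`ι(a) Φ(t, y) = Φ(t, a y)`. So `P̂` intertwines `T_{ι(a)}` with `T_a` on each latitude slice,
and at a non-polar point `ζ = Φ(t, y)` the average over `a` is the hypothesis on `P` applied to the
slice `y ↦ h(Φ(t, y))`, which gives `c · h(Φ(t, y)) = c · h(ζ)`. At the poles both sides
vanish, the right one because `h` does. -/

lemma coe_rot {d : ℕ} (b : SOg d) (x : Sph d) :
    (rot b x : Eucl d) = toEuclideanLin b.mat x := rfl

section

variable {m : ℕ}

@[simp]
lemma eqpart_apply (ξ : Sph (m + 2)) (i : Fin (m + 1)) :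
    eqpart ξ i = ξ.1 i.castSucc := rfl

lemma Sph.ext_eqpart {ξ ξ' : Sph (m + 2)} (hpart : eqpart ξ = eqpart ξ')
    (hlast : ξ.1 (Fin.last (m + 1)) = ξ'.1 (Fin.last (m + 1))) : ξ = ξ' := by
  apply Subtype.ext
  ext j
  induction j using Fin.lastCases with
  | last => exact hlast
  | cast i => simpa using congrArg (· i) hpart

lemma norm_eqpart_sq_add_sq_last (ξ : Sph (m + 2)) :
    ‖eqpart ξ‖ ^ 2 + ξ.1 (Fin.last (m + 1)) ^ 2 = 1 := by
  rw [EuclideanSpace.real_norm_sq_eq, ← sphere_sum_sq ξ, Fin.sum_univ_castSucc (n := m + 1)]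
  rfl

lemma norm_eqpart_eq_sin_lat (ξ : Sph (m + 2)) : ‖eqpart ξ‖ = sin (lat ξ) := by
  rw [lat, sin_arccos, ← norm_eqpart_sq_add_sq_last ξ, add_sub_cancel_right,
    sqrt_sq (norm_nonneg _)]

lemma coe_ydir {ξ : Sph (m + 2)} (he : eqpart ξ ≠ 0) :
    (ydir ξ : Eucl (m + 1)) = ‖eqpart ξ‖⁻¹ • eqpart ξ := by
  rw [ydir, dif_neg he]

lemma eqpart_npole : eqpart (npole (m + 1)) = 0 := by
  ext i
  simp [npole, (Fin.castSucc_lt_last i).ne]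

lemma eqpart_spole : eqpart (spole (m + 1)) = 0 := by
  ext i
  simp [spole, (Fin.castSucc_lt_last i).ne]

lemma eqpart_eq_zero_iff {ξ : Sph (m + 2)} :
    eqpart ξ = 0 ↔ ξ = npole (m + 1) ∨ ξ = spole (m + 1) := by
  refine ⟨fun he => ?_, by rintro (rfl | rfl) <;> simp [eqpart_npole, eqpart_spole]⟩
  have hlast : ξ.1 (Fin.last (m + 1)) ^ 2 = 1 := by
    simpa [he] using norm_eqpart_sq_add_sq_last ξ
  rcases sq_eq_one_iff.mp hlast with h1 | h1
  · exact .inl (Sph.ext_eqpart (he.trans eqpart_npole.symm) (by simp [h1, npole]))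
  · exact .inr (Sph.ext_eqpart (he.trans eqpart_spole.symm) (by simp [h1, spole]))

lemma eqpart_phi (t : ℝ) (y : Sph (m + 1)) :
    eqpart (phi t y) = sin t • (y : Eucl (m + 1)) := by
  ext i
  simp [phi]

lemma phi_last (t : ℝ) (y : Sph (m + 1)) : (phi t y).1 (Fin.last (m + 1)) = cos t := by
  simp [phi]

lemma phi_lat_ydir {ξ : Sph (m + 2)} (he : eqpart ξ ≠ 0) : phi (lat ξ) (ydir ξ) = ξ := by
  refine Sph.ext_eqpart ?_ ?_
  · rw [eqpart_phi, coe_ydir he, ← norm_eqpart_eq_sin_lat,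
      smul_inv_smul₀ (norm_ne_zero_iff.mpr he)]
  · have hsq := norm_eqpart_sq_add_sq_last ξ
    rw [phi_last, lat, cos_arccos] <;> nlinarith [sq_nonneg ‖eqpart ξ‖]

lemma iotaMat_mulVec (A : Matrix (Fin (m + 1)) (Fin (m + 1)) ℝ) (v : Fin (m + 2) → ℝ) :
    iotaMat A *ᵥ v = Fin.snoc (A *ᵥ fun i => v i.castSucc) (v (Fin.last (m + 1))) := by
  ext j
  refine Fin.lastCases ?_ (fun i => ?_) j <;>
    simp [iotaMat, mulVec, dotProduct, Fin.sum_univ_castSucc, finSumFinEquiv_symm_last,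
      finSumFinEquiv_symm_apply_castSucc]

lemma iotaMat_mul (A B : Matrix (Fin (m + 1)) (Fin (m + 1)) ℝ) :
    iotaMat (A * B) = iotaMat A * iotaMat B := by
  rw [iotaMat, iotaMat, iotaMat, reindex_apply, reindex_apply, reindex_apply,
    submatrix_mul_equiv, fromBlocks_multiply]
  simp

lemma iota_mul (a b : SOg (m + 1)) : iota (a * b) = iota a * iota b :=
  Subtype.ext <| Subtype.ext <| iotaMat_mul a.mat b.mat

lemma iota_one : iota (1 : SOg (m + 1)) = 1 := by
  apply Subtype.ext; apply Subtype.ext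
  change iotaMat 1 = 1
  rw [iotaMat, reindex_apply, fromBlocks_one, submatrix_one_equiv]

lemma iota_inv (a : SOg (m + 1)) : (iota a)⁻¹ = iota a⁻¹ :=
  inv_eq_of_mul_eq_one_right <| by rw [← iota_mul, mul_inv_cancel, iota_one]

lemma coe_rot_iota (g : SOg (m + 1)) (ξ : Sph (m + 2)) :
    (rot (iota g) ξ : Eucl (m + 2)) =
      WithLp.toLp 2 (Fin.snoc (g.mat *ᵥ WithLp.ofLp (eqpart ξ)) (ξ.1 (Fin.last (m + 1)))) := by
  change WithLp.toLp 2 (iotaMat g.mat *ᵥ _) = _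
  rw [iotaMat_mulVec]
  rfl

lemma eqpart_rot_iota (g : SOg (m + 1)) (ξ : Sph (m + 2)) :
    eqpart (rot (iota g) ξ) = toEuclideanLin g.mat (eqpart ξ) := by
  ext i
  simp [coe_rot_iota]

lemma rot_iota_last (g : SOg (m + 1)) (ξ : Sph (m + 2)) :
    (rot (iota g) ξ).1 (Fin.last (m + 1)) = ξ.1 (Fin.last (m + 1)) := by
  simp [coe_rot_iota]

lemma lat_rot_iota (g : SOg (m + 1)) (ξ : Sph (m + 2)) : lat (rot (iota g) ξ) = lat ξ := by
  rw [lat, lat, rot_iota_last]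

lemma norm_eqpart_rot_iota (g : SOg (m + 1)) (ξ : Sph (m + 2)) :
    ‖eqpart (rot (iota g) ξ)‖ = ‖eqpart ξ‖ := by
  rw [norm_eqpart_eq_sin_lat, norm_eqpart_eq_sin_lat, lat_rot_iota]

lemma eqpart_rot_iota_eq_zero_iff (g : SOg (m + 1)) {ξ : Sph (m + 2)} :
    eqpart (rot (iota g) ξ) = 0 ↔ eqpart ξ = 0 := by
  rw [← norm_eq_zero, norm_eqpart_rot_iota, norm_eq_zero]

lemma ydir_rot_iota (g : SOg (m + 1)) {ξ : Sph (m + 2)} (he : eqpart ξ ≠ 0) :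
    ydir (rot (iota g) ξ) = rot g (ydir ξ) := by
  have he' : eqpart (rot (iota g) ξ) ≠ 0 := by
    rwa [← norm_ne_zero_iff, norm_eqpart_rot_iota, norm_ne_zero_iff]
  apply Subtype.ext
  rw [coe_ydir he', coe_rot, coe_ydir he, norm_eqpart_rot_iota, eqpart_rot_iota, map_smul]

lemma rot_iota_phi (g : SOg (m + 1)) (t : ℝ) (y : Sph (m + 1)) :
    rot (iota g) (phi t y) = phi t (rot g y) := by
  refine Sph.ext_eqpart ?_ ?_
  · rw [eqpart_rot_iota, eqpart_phi, eqpart_phi, map_smul, coe_rot]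
  · rw [rot_iota_last, phi_last, phi_last]

lemma ringSlice_comp_rot_iota (f : C(Sph (m + 2), ℝ)) (g : SOg (m + 1)) (t : ℝ) :
    ringSlice (f.comp (rotCM (iota g))) t = (ringSlice f t).comp (rotCM g) := by
  ext y
  exact congrArg f (rot_iota_phi g t y)

lemma hatOp_of_eqpart_eq_zero (P : C(Sph (m + 1), ℝ) →L[ℝ] C(Sph (m + 1), ℝ))
    (g : Sph (m + 2) → ℝ) {ξ : Sph (m + 2)} (he : eqpart ξ = 0) : hatOp P g ξ = 0 :=
  if_pos (eqpart_eq_zero_iff.mp he)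

lemma hatOp_of_eqpart_ne_zero (P : C(Sph (m + 1), ℝ) →L[ℝ] C(Sph (m + 1), ℝ))
    (f : C(Sph (m + 2), ℝ)) {ξ : Sph (m + 2)} (he : eqpart ξ ≠ 0) :
    hatOp P f ξ = P (ringSlice f (lat ξ)) (ydir ξ) := by
  rw [hatOp, if_neg (mt eqpart_eq_zero_iff.mpr he), dif_pos f.continuous]
  rfl

lemma hatOp_comp_rot_iota (P : C(Sph (m + 1), ℝ) →L[ℝ] C(Sph (m + 1), ℝ))
    (f : C(Sph (m + 2), ℝ)) (a : SOg (m + 1)) {ζ : Sph (m + 2)} (he : eqpart ζ ≠ 0) :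
    hatOp P (f.comp (rotCM (iota a))) (rot (iota a)⁻¹ ζ) =
      P ((ringSlice f (lat ζ)).comp (rotCM a)) (rot a⁻¹ (ydir ζ)) := by
  rw [iota_inv, hatOp_of_eqpart_ne_zero P _ (mt (eqpart_rot_iota_eq_zero_iff _).mp he),
    lat_rot_iota, ydir_rot_iota _ he, ringSlice_comp_rot_iota]

end

theorem stabilizer_average_of_lifted_operator_general
    (m : ℕ)
    (P : C(Sph (m + 1), ℝ) →L[ℝ] C(Sph (m + 1), ℝ)) (c : ℝ)
    (μk : Measure (SOg (m + 1)))
    (hP : ∀ (h : C(Sph (m + 1), ℝ)) (ξ : Sph (m + 1)),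
      ∫ a : SOg (m + 1), (P (h.comp (rotCM a))) (rot a⁻¹ ξ) ∂μk = c * h ξ)
    (h : C(Sph (m + 2), ℝ)) (h0 : h (npole (m + 1)) = 0) (hπ : h (spole (m + 1)) = 0)
    (ζ : Sph (m + 2)) :
    ∫ a : SOg (m + 1), hatOp P (⇑(h.comp (rotCM (iota a)))) (rot (iota a)⁻¹ ζ) ∂μk
      = c * h ζ := by
  by_cases he : eqpart ζ = 0
  · have hζ : h ζ = 0 := by
      rcases eqpart_eq_zero_iff.mp he with rfl | rfl
      exacts [h0, hπ]
    have hzero (a : SOg (m + 1)) :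
        hatOp P (⇑(h.comp (rotCM (iota a)))) (rot (iota a)⁻¹ ζ) = 0 := by
      rw [iota_inv]
      exact hatOp_of_eqpart_eq_zero P _ ((eqpart_rot_iota_eq_zero_iff _).mpr he)
    simp only [hzero, hζ, integral_zero, mul_zero]
  · calc ∫ a, hatOp P (⇑(h.comp (rotCM (iota a)))) (rot (iota a)⁻¹ ζ) ∂μk
        = ∫ a, P ((ringSlice h (lat ζ)).comp (rotCM a)) (rot a⁻¹ (ydir ζ)) ∂μk := by
          simp_rw [hatOp_comp_rot_iota P h _ he]
      _ = c * h (phi (lat ζ) (ydir ζ)) := hP _ _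
      _ = c * h ζ := by rw [phi_lat_ydir he]

/-- `k = m + 1 ≥ 2`: averaging the conjugates of the lifted operator `P̂` over the
stabilizer `ι(SO(k))` of the north pole reproduces `c · Id` on functions vanishing at the
poles. -/
theorem stabilizer_average_of_lifted_operator
    (m : ℕ) (hm : 1 ≤ m)
    (P : C(Sph (m + 1), ℝ) →L[ℝ] C(Sph (m + 1), ℝ)) (c : ℝ)
    (μk : Measure (SOg (m + 1))) [IsProbabilityMeasure μk]
    (hμk : ∀ g : SOg (m + 1), MeasurePreserving (fun b => g * b) μk μk)
    (hP : ∀ (h : C(Sph (m + 1), ℝ)) (ξ : Sph (m + 1)),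
      ∫ a : SOg (m + 1), (P (h.comp (rotCM a))) (rot a⁻¹ ξ) ∂μk = c * h ξ)
    (h : C(Sph (m + 2), ℝ)) (h0 : h (npole (m + 1)) = 0) (hπ : h (spole (m + 1)) = 0)
    (ζ : Sph (m + 2)) :
    ∫ a : SOg (m + 1), hatOp P (⇑(h.comp (rotCM (iota a)))) (rot (iota a)⁻¹ ζ) ∂μk
      = c * h ζ :=
  stabilizer_average_of_lifted_operator_general m P c μk hP h h0 hπ ζ
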